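/- arXiv:2311.05802 — 2 statements merged into one kernel-verified Lean document; each statement's English description precedes it below -/
import Mathlib

section
/- Suppose h : ℝⁿ → ℝ is bounded above by M > 0, and the stochastic closed-loop system satisfies E[h(x_{k+1}) | x_k] ≥ α·h(x_k) for some α ∈ (0,1) whenever h(x_k) ≥ 0. Then the K-step exit probability satisfies P(min_{0≤k≤K} h(x_k) < 0) ≤ 1 − (h(x₀)/M)·α^K, for any initial condition x₀ with h(x₀) ≥ 0. -/
/-!
Let `Sₖ` be the event that `h(x₀), …, h(xₖ)` are all nonnegative. Since `Sₖ` is `ℱₖ`-measurable,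
the conditional expectation condition gives `α ∫_{Sₖ} h(xₖ) ≤ ∫_{Sₖ} h(x_{k+1})`, and discarding the
part of `Sₖ` where `h(x_{k+1}) < 0` only increases the right-hand side, which becomes
`∫_{S_{k+1}} h(x_{k+1})`. By induction `αᴷ h(x₀) ≤ ∫_{S_K} h(x_K) ≤ M · P(S_K)`, and the exit event
is the complement of `S_K`.
-/

open MeasureTheory

namespace MeasureTheory

variable {Ω : Type*} {m0 : MeasurableSpace Ω} {P : Measure Ω}

theorem setIntegral_le_setIntegral_inter_nonneg {f : Ω → ℝ} {s : Set Ω} (hs : MeasurableSet s)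
    (hf : Measurable f) (hfi : IntegrableOn f s P) :
    ∫ ω in s, f ω ∂P ≤ ∫ ω in s ∩ {ω | 0 ≤ f ω}, f ω ∂P := by
  have hpos : MeasurableSet {ω | 0 ≤ f ω} := hf measurableSet_Ici
  have hneg : ∫ ω in s \ {ω | 0 ≤ f ω}, f ω ∂P ≤ 0 :=
    setIntegral_nonpos (hs.diff hpos) fun ω hω => (not_le.1 hω.2).le
  linarith [integral_inter_add_sdiff hpos hfi]

variable {Y : ℕ → Ω → ℝ} {k : ℕ}

def nonnegUpTo (Y : ℕ → Ω → ℝ) (k : ℕ) : Set Ω := {ω | ∀ j ≤ k, 0 ≤ Y j ω}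

theorem nonnegUpTo_zero : nonnegUpTo Y 0 = {ω | 0 ≤ Y 0 ω} := by
  simp [nonnegUpTo]

theorem nonnegUpTo_succ : nonnegUpTo Y (k + 1) = nonnegUpTo Y k ∩ {ω | 0 ≤ Y (k + 1) ω} := by
  ext ω
  simp [nonnegUpTo, Nat.le_succ_iff, or_imp, forall_and]

theorem compl_nonnegUpTo : (nonnegUpTo Y k)ᶜ = {ω | ∃ j ≤ k, Y j ω < 0} := by
  ext ω
  simp [nonnegUpTo]

variable {ℱ : Filtration ℕ m0}

theorem Adapted.measurableSet_nonnegUpTo (hY : Adapted ℱ Y) (k : ℕ) :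
    MeasurableSet[ℱ k] (nonnegUpTo Y k) := by
  induction k with
  | zero => rw [nonnegUpTo_zero]; exact hY 0 measurableSet_Ici
  | succ k ih =>
    rw [nonnegUpTo_succ]
    exact (ℱ.mono k.le_succ _ ih).inter (hY (k + 1) measurableSet_Ici)

variable [IsFiniteMeasure P] {α : ℝ}

theorem Adapted.mul_setIntegral_nonnegUpTo_le_succ (hY : Adapted ℱ Y)
    (hk : Integrable (Y k) P) (hk₁ : Integrable (Y (k + 1)) P)
    (hcond : (fun ω => α * Y k ω) ≤ᵐ[P] P[Y (k + 1)|ℱ k]) :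
    α * ∫ ω in nonnegUpTo Y k, Y k ω ∂P ≤ ∫ ω in nonnegUpTo Y (k + 1), Y (k + 1) ω ∂P := by
  have hS := hY.measurableSet_nonnegUpTo k
  calc α * ∫ ω in nonnegUpTo Y k, Y k ω ∂P = ∫ ω in nonnegUpTo Y k, α * Y k ω ∂P :=
        (integral_const_mul α _).symm
    _ ≤ ∫ ω in nonnegUpTo Y k, P[Y (k + 1)|ℱ k] ω ∂P :=
        setIntegral_mono_ae (hk.const_mul α).integrableOn integrable_condExp.integrableOn hcond
    _ = ∫ ω in nonnegUpTo Y k, Y (k + 1) ω ∂P := setIntegral_condExp (ℱ.le k) hk₁ hS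
    _ ≤ ∫ ω in nonnegUpTo Y (k + 1), Y (k + 1) ω ∂P := by
        rw [nonnegUpTo_succ]
        exact setIntegral_le_setIntegral_inter_nonneg (ℱ.le k _ hS) hY.measurable hk₁.integrableOn

theorem Adapted.pow_mul_setIntegral_nonnegUpTo_le (hα : 0 ≤ α) (hY : Adapted ℱ Y)
    (hint : ∀ k, Integrable (Y k) P) (hcond : ∀ k, (fun ω => α * Y k ω) ≤ᵐ[P] P[Y (k + 1)|ℱ k])
    (k : ℕ) :
    α ^ k * ∫ ω in nonnegUpTo Y 0, Y 0 ω ∂P ≤ ∫ ω in nonnegUpTo Y k, Y k ω ∂P := by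
  induction k with
  | zero => simp
  | succ k ih =>
    calc α ^ (k + 1) * ∫ ω in nonnegUpTo Y 0, Y 0 ω ∂P
        = α * (α ^ k * ∫ ω in nonnegUpTo Y 0, Y 0 ω ∂P) := by ring
      _ ≤ α * ∫ ω in nonnegUpTo Y k, Y k ω ∂P := by gcongr
      _ ≤ _ := hY.mul_setIntegral_nonnegUpTo_le_succ (hint k) (hint (k + 1)) (hcond k)

end MeasureTheory

/-- K-step exit probability bound for a stochastic system satisfying the
expectation DTCBF condition. -/
theorem k_step_exit_probability_bound {n : ℕ}
    {Ω : Type*} {m0 : MeasurableSpace Ω} (P : Measure Ω) [IsProbabilityMeasure P]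
    (ℱ : Filtration ℕ m0)
    (X : ℕ → Ω → EuclideanSpace ℝ (Fin n))
    (hadapted : ∀ k, Measurable[ℱ k] (X k))
    (h : EuclideanSpace ℝ (Fin n) → ℝ) (hcont : Continuous h)
    (M : ℝ) (hM : 0 < M) (hbdd : ∀ x, h x ≤ M)
    (α : ℝ) (hα : α ∈ Set.Ioo (0 : ℝ) 1)
    (hint : ∀ k, Integrable (fun ω => h (X k ω)) P)
    (hcbf : ∀ k, (fun ω => α * h (X k ω)) ≤ᵐ[P] P[fun ω => h (X (k + 1) ω)|ℱ k])
    (x0 : EuclideanSpace ℝ (Fin n)) (hX0 : X 0 = fun _ => x0)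
    (h0 : 0 ≤ h x0) (K : ℕ) :
    P {ω | ∃ k ≤ K, h (X k ω) < 0} ≤ ENNReal.ofReal (1 - h x0 / M * α ^ K) := by
  set Y : ℕ → Ω → ℝ := fun k ω => h (X k ω)
  have hY : Adapted ℱ Y := fun k => hcont.measurable.comp (hadapted k)
  have hS : MeasurableSet (nonnegUpTo Y K) := ℱ.le K _ (hY.measurableSet_nonnegUpTo K)
  have hS₀ : nonnegUpTo Y 0 = Set.univ := by simp [nonnegUpTo_zero, Y, hX0, h0]
  have hbound : α ^ K * h x0 ≤ P.real (nonnegUpTo Y K) * M := calc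
    α ^ K * h x0 = α ^ K * ∫ ω in nonnegUpTo Y 0, Y 0 ω ∂P := by simp [hS₀, Y, hX0]
    _ ≤ ∫ ω in nonnegUpTo Y K, Y K ω ∂P :=
        hY.pow_mul_setIntegral_nonnegUpTo_le hα.1.le hint hcbf K
    _ ≤ ∫ _ in nonnegUpTo Y K, M ∂P :=
        setIntegral_mono_on (hint K).integrableOn integrableOn_const hS fun ω _ => hbdd _
    _ = P.real (nonnegUpTo Y K) * M := by rw [setIntegral_const, smul_eq_mul]
  have hsurvive : h x0 / M * α ^ K ≤ P.real (nonnegUpTo Y K) := by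
    rwa [div_mul_eq_mul_div, div_le_iff₀ hM, mul_comm (h x0)]
  rw [← compl_nonnegUpTo, ← ofReal_measureReal, probReal_compl_eq_one_sub hS]
  exact ENNReal.ofReal_le_ofReal (by linarith)
end

section
/- Let h be a DTCBF satisfying h(F(x,k(x)) + E[d|x]) − (λ_max/2)·tr(cov(d|x)) ≥ α·h(x) for all x in C. If h is C², concave, with sup h ≤ M and ‖∇²h(x)‖₂ ≤ λ_max everywhere, then E[h(F(x,k(x)) + d) | x] ≥ α·h(x) for all x ∈ C. -/
/-!
A `C²` function whose second derivative has norm at most `λ` lies above its tangent paraboloid,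
`h (a + v) ≥ h a + Dh(a) v - λ/2 ‖v‖²`: along the line `t ↦ a + t • v`, adding `λ/2 ‖v‖² t²`
makes it convex. Taking `a = F x + E[d]` and `v = d - E[d]` and integrating, the linear term has
mean zero and the quadratic term integrates to the trace of the covariance, so
`E[h (F x + d)] ≥ h (F x + E[d]) - λ/2 tr cov ≥ α h x`.
-/

open MeasureTheory Set

section SecondDerivative

variable {𝕜 E F : Type*} [NontriviallyNormedField 𝕜] [NormedAddCommGroup E] [NormedSpace 𝕜 E]
  [NormedAddCommGroup F] [NormedSpace 𝕜 F]

theorem norm_fderiv_fderiv_apply_le (f : E → F) (z v : E) :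
    ‖fderiv 𝕜 (fderiv 𝕜 f) z v v‖ ≤ ‖iteratedFDeriv 𝕜 2 f z‖ * ‖v‖ ^ 2 := by
  have := (iteratedFDeriv 𝕜 2 f z).le_opNorm ![v, v]
  rw [iteratedFDeriv_two_apply, Fin.prod_univ_two] at this
  simpa [sq] using this

end SecondDerivative

section Taylor

variable {E F : Type*} [NormedAddCommGroup E] [NormedSpace ℝ E]
  [NormedAddCommGroup F] [NormedSpace ℝ F] {g : E → F} {a v : E} {t : ℝ}

theorem DifferentiableAt.hasDerivAt_comp_add_smul (hg : DifferentiableAt ℝ g (a + t • v)) :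
    HasDerivAt (fun s : ℝ => g (a + s • v)) (fderiv ℝ g (a + t • v) v) t := by
  refine hg.hasFDerivAt.comp_hasDerivAt t ?_
  simpa using ((hasDerivAt_id t).smul_const v).const_add a

theorem ContDiff.le_add_fderiv_sub_of_norm_iteratedFDeriv_le {f : E → ℝ} {C : ℝ}
    (hf : ContDiff ℝ 2 f) (hC : ∀ x, ‖iteratedFDeriv ℝ 2 f x‖ ≤ C) (a v : E) :
    f a + fderiv ℝ f a v - C / 2 * ‖v‖ ^ 2 ≤ f (a + v) := by
  have hdf : Differentiable ℝ f := hf.differentiable two_ne_zero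
  have hddf : Differentiable ℝ (fderiv ℝ f) :=
    (hf.fderiv_right (m := 1) le_rfl).differentiable one_ne_zero
  set c := C * ‖v‖ ^ 2
  set φ : ℝ → ℝ := fun t => f (a + t • v) + c / 2 * t ^ 2
  have hφ' : ∀ t, HasDerivAt φ (fderiv ℝ f (a + t • v) v + c * t) t := fun t => by
    refine ((hdf (a + t • v)).hasDerivAt_comp_add_smul.add
      ((hasDerivAt_pow 2 t).const_mul (c / 2))).congr_deriv ?_
    ring
  have hφ'' : ∀ t, HasDerivAt (fun s => fderiv ℝ f (a + s • v) v + c * s)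
      (fderiv ℝ (fderiv ℝ f) (a + t • v) v v + c) t := fun t => by
    refine (((ContinuousLinearMap.apply ℝ ℝ v).hasFDerivAt.comp_hasDerivAt t
      (hddf (a + t • v)).hasDerivAt_comp_add_smul).add
      ((hasDerivAt_id t).const_mul c)).congr_deriv ?_
    simp
  have hconvex : ConvexOn ℝ univ φ := by
    refine convexOn_of_hasDerivWithinAt2_nonneg convex_univ
      (fun t _ => (hφ' t).continuousAt.continuousWithinAt)
      (fun t _ => (hφ' t).hasDerivWithinAt) (fun t _ => (hφ'' t).hasDerivWithinAt) fun t _ => ?_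
    have hsecond := (abs_le.mp ((norm_fderiv_fderiv_apply_le f (a + t • v) v).trans
      (mul_le_mul_of_nonneg_right (hC _) (sq_nonneg ‖v‖)))).1
    linarith
  have hslope := hconvex.le_slope_of_hasDerivAt (mem_univ 0) (mem_univ 1) zero_lt_one (hφ' 0)
  simp only [φ, slope_def_field, zero_smul, one_smul, add_zero, mul_zero, mul_one, one_pow, ne_eq,
    OfNat.ofNat_ne_zero, not_false_eq_true, zero_pow, sub_zero, div_one] at hslope
  linarith

end Taylor

section Expectation

variable {Ω E : Type*} [MeasurableSpace Ω] {μ : Measure Ω} [IsProbabilityMeasure μ]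
  [NormedAddCommGroup E] [NormedSpace ℝ E] [CompleteSpace E] {X : Ω → E}

theorem integral_clm_sub_integral_eq_zero (L : E →L[ℝ] ℝ) (hX : Integrable X μ) :
    ∫ ω, L (X ω - ∫ ω', X ω' ∂μ) ∂μ = 0 := by
  have hXm : Integrable (fun ω => X ω - ∫ ω', X ω' ∂μ) μ := hX.sub (integrable_const _)
  rw [L.integral_comp_comm hXm, integral_sub hX (integrable_const _),
    integral_const, probReal_univ, one_smul, sub_self, map_zero]

theorem integral_comp_add_ge_of_norm_iteratedFDeriv_le {f : E → ℝ} {C : ℝ} (hf : ContDiff ℝ 2 f)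
    (hC : ∀ x, ‖iteratedFDeriv ℝ 2 f x‖ ≤ C) (a : E) (hX : Integrable X μ)
    (hvar : Integrable (fun ω => ‖X ω - ∫ ω', X ω' ∂μ‖ ^ 2) μ)
    (hfX : Integrable (fun ω => f (a + X ω)) μ) :
    f (a + ∫ ω, X ω ∂μ) - C / 2 * ∫ ω, ‖X ω - ∫ ω', X ω' ∂μ‖ ^ 2 ∂μ ≤ ∫ ω, f (a + X ω) ∂μ := by
  set m := ∫ ω, X ω ∂μ
  set L := fderiv ℝ f (a + m)
  have hXm : Integrable (fun ω => X ω - m) μ := hX.sub (integrable_const m)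
  have hlin : Integrable (fun ω => L (X ω - m)) μ := L.integrable_comp hXm
  have htangent : Integrable (fun ω => f (a + m) + L (X ω - m)) μ := (integrable_const _).add hlin
  have hquad : Integrable (fun ω => C / 2 * ‖X ω - m‖ ^ 2) μ := hvar.const_mul _
  calc f (a + m) - C / 2 * ∫ ω, ‖X ω - m‖ ^ 2 ∂μ
      = ∫ ω, (f (a + m) + L (X ω - m) - C / 2 * ‖X ω - m‖ ^ 2) ∂μ := by
        rw [integral_sub htangent hquad, integral_add (integrable_const _) hlin,
          integral_const_mul, integral_const, integral_clm_sub_integral_eq_zero L hX]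
        simp
    _ ≤ ∫ ω, f (a + X ω) ∂μ := by
        refine integral_mono (htangent.sub hquad) hfX fun ω => ?_
        simpa using hf.le_add_fderiv_sub_of_norm_iteratedFDeriv_le hC (a + m) (X ω - m)

end Expectation

theorem EuclideanSpace.norm_sub_sq_eq_sum {ι : Type*} [Fintype ι] (x m : EuclideanSpace ℝ ι) :
    ‖x - m‖ ^ 2 = ∑ i, (x i - m i) * (x i - m i) := by
  simp [EuclideanSpace.norm_sq_eq, ← sq]

section EuclideanSpace

variable {Ω ι : Type*} [MeasurableSpace Ω] {μ : Measure Ω} [Fintype ι]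
  {X : Ω → EuclideanSpace ℝ ι} {m : EuclideanSpace ℝ ι}

theorem EuclideanSpace.integrable_norm_sub_sq
    (hX : ∀ i, Integrable (fun ω => (X ω i - m i) * (X ω i - m i)) μ) :
    Integrable (fun ω => ‖X ω - m‖ ^ 2) μ := by
  simpa only [EuclideanSpace.norm_sub_sq_eq_sum] using integrable_finsetSum _ fun i _ => hX i

theorem EuclideanSpace.integral_norm_sub_sq
    (hX : ∀ i, Integrable (fun ω => (X ω i - m i) * (X ω i - m i)) μ) :
    ∫ ω, ‖X ω - m‖ ^ 2 ∂μ = ∑ i, ∫ ω, (X ω i - m i) * (X ω i - m i) ∂μ := by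
  simp only [EuclideanSpace.norm_sub_sq_eq_sum]
  exact integral_finsetSum _ fun i _ => hX i

end EuclideanSpace

theorem jensen_enhanced_dtcbf_implies_expectation_condition_general {n : ℕ}
    (Fc : EuclideanSpace ℝ (Fin n) → EuclideanSpace ℝ (Fin n))
    (h : EuclideanSpace ℝ (Fin n) → ℝ) (lamMax : ℝ)
    (hC2 : ContDiff ℝ 2 h)
    (hHess : ∀ x, ‖iteratedFDeriv ℝ 2 h x‖ ≤ lamMax)
    (α : ℝ)
    -- conditional disturbance distribution d | x, with mean `mean x` and covariance `cov x`
    (ν : EuclideanSpace ℝ (Fin n) → Measure (EuclideanSpace ℝ (Fin n)))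
    [∀ x, IsProbabilityMeasure (ν x)]
    (mean : EuclideanSpace ℝ (Fin n) → EuclideanSpace ℝ (Fin n))
    (cov : EuclideanSpace ℝ (Fin n) → Matrix (Fin n) (Fin n) ℝ)
    (hdint : ∀ x, Integrable id (ν x))
    (hmean : ∀ x, mean x = ∫ d, d ∂(ν x))
    (hcov : ∀ x i j, cov x i j = ∫ d, (d i - mean x i) * (d j - mean x j) ∂(ν x))
    (hcovint : ∀ x i j, Integrable (fun d => (d i - mean x i) * (d j - mean x j)) (ν x))
    (hint : ∀ x, Integrable (fun d => h (Fc x + d)) (ν x))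
    (hjensen : ∀ x, h x ≥ 0 →
      h (Fc x + mean x) - lamMax / 2 * Matrix.trace (cov x) ≥ α * h x) :
    ∀ x, h x ≥ 0 → (∫ d, h (Fc x + d) ∂(ν x)) ≥ α * h x := by
  intro x hx
  have hvar : Integrable (fun d => ‖d - mean x‖ ^ 2) (ν x) :=
    EuclideanSpace.integrable_norm_sub_sq (X := fun d => d) fun i => hcovint x i i
  have htrace : Matrix.trace (cov x) = ∫ d, ‖d - mean x‖ ^ 2 ∂(ν x) := by
    rw [EuclideanSpace.integral_norm_sub_sq (X := fun d => d) fun i => hcovint x i i]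
    exact Finset.sum_congr rfl fun i _ => hcov x i i
  have hjensen_x := hjensen x hx
  rw [htrace, hmean x] at hjensen_x
  rw [hmean x] at hvar
  exact hjensen_x.trans
    (integral_comp_add_ge_of_norm_iteratedFDeriv_le hC2 hHess (Fc x) (hdint x) hvar (hint x))

/-- if the Jensen-enhanced DTCBF condition holds (using the conditional
mean and covariance trace of the disturbance), then the expectation DTCBF condition
E[h(F(x,k(x)) + d) | x] ≥ α h(x) holds on C = {x : h(x) ≥ 0}. -/
theorem jensen_enhanced_dtcbf_implies_expectation_condition {n : ℕ}
    (Fc : EuclideanSpace ℝ (Fin n) → EuclideanSpace ℝ (Fin n))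
    (h : EuclideanSpace ℝ (Fin n) → ℝ) (M lamMax : ℝ)
    (hC2 : ContDiff ℝ 2 h)
    (hconc : ConcaveOn ℝ Set.univ h)
    (hbdd : ∀ x, h x ≤ M)
    (hHess : ∀ x, ‖iteratedFDeriv ℝ 2 h x‖ ≤ lamMax)
    (α : ℝ) (hα : α ∈ Set.Ioo (0 : ℝ) 1)
    -- conditional disturbance distribution d | x, with mean `mean x` and covariance `cov x`
    (ν : EuclideanSpace ℝ (Fin n) → Measure (EuclideanSpace ℝ (Fin n)))
    [∀ x, IsProbabilityMeasure (ν x)]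
    (mean : EuclideanSpace ℝ (Fin n) → EuclideanSpace ℝ (Fin n))
    (cov : EuclideanSpace ℝ (Fin n) → Matrix (Fin n) (Fin n) ℝ)
    (hdint : ∀ x, Integrable id (ν x))
    (hmean : ∀ x, mean x = ∫ d, d ∂(ν x))
    (hcov : ∀ x i j, cov x i j = ∫ d, (d i - mean x i) * (d j - mean x j) ∂(ν x))
    (hcovint : ∀ x i j, Integrable (fun d => (d i - mean x i) * (d j - mean x j)) (ν x))
    (hint : ∀ x, Integrable (fun d => h (Fc x + d)) (ν x))
    (hjensen : ∀ x, h x ≥ 0 →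
      h (Fc x + mean x) - lamMax / 2 * Matrix.trace (cov x) ≥ α * h x) :
    ∀ x, h x ≥ 0 → (∫ d, h (Fc x + d) ∂(ν x)) ≥ α * h x :=
  jensen_enhanced_dtcbf_implies_expectation_condition_general Fc h lamMax hC2 hHess α ν mean cov
    hdint hmean hcov hcovint hint hjensen
end
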